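/- arXiv:1806.11441 — 3 statements merged into one kernel-verified Lean document; each statement's English description precedes it below -/
import Mathlib

section
/- Let m, n ≥ 1, p ≥ 2 and δ > 0. Let V : ℝ^m → ℝ^n be a smooth map with ΔV = 0 (Δ the componentwise Euclidean Laplacian), and let η : ℝ^m → ℝ be a smooth compactly supported function. Then (1/2) ∫_{ℝ^m} η(x)² (‖V(x)‖² + δ)^{(p-4)/2} ‖DV(x)‖² ‖V(x)‖² dx ≤ 2 ∫_{ℝ^m} (‖V(x)‖² + δ)^{p/2} ‖∇η(x)‖² dx, where ‖DV(x)‖² = ∑_{i=1}^m ‖∂V/∂x_i(x)‖² is the squared Hilbert–Schmidt norm of the derivative. -/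
open MeasureTheory

/-- The componentwise Euclidean Laplacian `Δ f = ∑ i ∂²f/∂x_i²` of a map
`f : ℝ^m → F`. -/
noncomputable def lapE {m : ℕ} {F : Type*} [NormedAddCommGroup F] [NormedSpace ℝ F]
    (f : EuclideanSpace ℝ (Fin m) → F) (x : EuclideanSpace ℝ (Fin m)) : F :=
  ∑ i : Fin m, fderiv ℝ (fun y => fderiv ℝ f y (EuclideanSpace.single i 1)) x
    (EuclideanSpace.single i 1)

noncomputable def innerB (n : ℕ) : EuclideanSpace ℝ (Fin n) →L[ℝ] EuclideanSpace ℝ (Fin n) →L[ℝ] ℝ :=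
  (isBoundedBilinearMap_inner (𝕜 := ℝ) (E := EuclideanSpace ℝ (Fin n))).toContinuousLinearMap

lemma sum_sq_apply_le (m : ℕ) (L : EuclideanSpace ℝ (Fin m) →L[ℝ] ℝ) :
    ∑ i : Fin m, (L (EuclideanSpace.single i 1)) ^ 2 ≤ ‖L‖ ^ 2 := by
  set v : EuclideanSpace ℝ (Fin m) :=
    (InnerProductSpace.toDual ℝ (EuclideanSpace ℝ (Fin m))).symm L with hv
  have hL : ∀ x, L x = inner ℝ v x := fun x =>
    (InnerProductSpace.toDual_symm_apply (𝕜 := ℝ)).symm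
  have hvi : ∀ i, L (EuclideanSpace.single i 1) = v i := by
    intro i
    rw [hL]
    simp [EuclideanSpace.inner_single_right]
  have hnv : ‖L‖ = ‖v‖ := by
    rw [hv]
    exact ((InnerProductSpace.toDual ℝ _).symm.norm_map L).symm
  have : ∑ i : Fin m, (L (EuclideanSpace.single i 1)) ^ 2 = ‖v‖ ^ 2 := by
    simp_rw [hvi]
    rw [EuclideanSpace.norm_eq, Real.sq_sqrt (by positivity)]
    simp [sq_abs]
  rw [this, hnv]

lemma innerB_apply (n : ℕ) (v w : EuclideanSpace ℝ (Fin n)) :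
    innerB n v w = inner ℝ v w := rfl

set_option maxHeartbeats 2000000 in
theorem core (m n : ℕ) (q : ℝ) (hq : 0 ≤ q) (δ : ℝ) (hδ : 0 < δ)
    (V : EuclideanSpace ℝ (Fin m) → EuclideanSpace ℝ (Fin n)) (hV : ContDiff ℝ (⊤ : ℕ∞) V) (hharm : ∀ x, lapE V x = 0)
    (η : EuclideanSpace ℝ (Fin m) → ℝ) (hη : ContDiff ℝ (⊤ : ℕ∞) η) (hηsupp : HasCompactSupport η) :
    ∫ x, η x ^ 2 * (‖V x‖ ^ 2 + δ) ^ q *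
        (∑ i : Fin m, ‖fderiv ℝ V x (EuclideanSpace.single i 1)‖ ^ 2)
      ≤ 4 * ∫ x, (‖V x‖ ^ 2 + δ) ^ (q + 1) * ‖fderiv ℝ η x‖ ^ 2 := by
  have hVd : ∀ x, HasFDerivAt V (fderiv ℝ V x) x :=
    fun x => (hV.differentiable (by simp) x).hasFDerivAt
  have hηd : ∀ x, HasFDerivAt η (fderiv ℝ η x) x :=
    fun x => (hη.differentiable (by simp) x).hasFDerivAt
  set e : Fin m → EuclideanSpace ℝ (Fin m) := fun i => EuclideanSpace.single i 1 with he
  set g : Fin m → EuclideanSpace ℝ (Fin m) → EuclideanSpace ℝ (Fin n) := fun i x => fderiv ℝ V x (e i) with hg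
  set s : EuclideanSpace ℝ (Fin m) → ℝ := fun x => ‖V x‖ ^ 2 + δ with hs
  have hspos : ∀ x, 0 < s x := fun x => by positivity
  set ρ : EuclideanSpace ℝ (Fin m) → ℝ := fun x => s x ^ q with hρ
  have hρ0 : ∀ x, 0 ≤ ρ x := fun x => Real.rpow_nonneg (hspos x).le q
  set c : EuclideanSpace ℝ (Fin m) → ℝ := fun x => η x ^ 2 * ρ x with hc
  set W : EuclideanSpace ℝ (Fin m) → EuclideanSpace ℝ (Fin n) := fun x => c x • V x with hW
  -- derivative of s
  set Ds : (EuclideanSpace ℝ (Fin m)) → (EuclideanSpace ℝ (Fin m) →L[ℝ] ℝ) := fun x => 2 • (innerSL ℝ (V x)).comp (fderiv ℝ V x) with hDs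
  have hsd : ∀ x, HasFDerivAt s (Ds x) x := fun x => ((hVd x).norm_sq).add_const δ
  have hρd : ∀ x, HasFDerivAt ρ ((q * s x ^ (q - 1)) • Ds x) x := fun x =>
    (Real.hasDerivAt_rpow_const (x := s x) (p := q)
      (Or.inl (hspos x).ne')).comp_hasFDerivAt x (hsd x)
  have hη2d : ∀ x, HasFDerivAt (fun y => η y ^ 2) ((2 * η x) • fderiv ℝ η x) x := by
    intro x
    have := (hηd x).mul (hηd x)
    simp only [pow_two, two_mul, add_smul]
    exact this
  set cd : (EuclideanSpace ℝ (Fin m)) → (EuclideanSpace ℝ (Fin m) →L[ℝ] ℝ) := fun x =>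
    (η x ^ 2) • ((q * s x ^ (q - 1)) • Ds x) + ρ x • ((2 * η x) • fderiv ℝ η x) with hcd
  have hcd' : ∀ x, HasFDerivAt c (cd x) x := fun x => (hη2d x).mul (hρd x)
  have hWd : ∀ x, HasFDerivAt W (c x • fderiv ℝ V x + (cd x).smulRight (V x)) x :=
    fun x => (hcd' x).smul (hVd x)
  -- smoothness
  have hsC : ContDiff ℝ (⊤ : ℕ∞) s := (hV.norm_sq ℝ).add contDiff_const
  have hρC : ContDiff ℝ (⊤ : ℕ∞) ρ := hsC.rpow_const_of_ne (fun x => (hspos x).ne')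
  have hcC : ContDiff ℝ (⊤ : ℕ∞) c := (hη.pow 2).mul hρC
  have hWC : ContDiff ℝ (⊤ : ℕ∞) W := hcC.smul hV
  have hgC : ∀ i, ContDiff ℝ (⊤ : ℕ∞) (g i) := fun i =>
    (hV.fderiv_right (m := (⊤ : ℕ∞)) (by simp)).clm_apply contDiff_const
  have hfdWC : ∀ i, Continuous (fun x => fderiv ℝ W x (e i)) := fun i =>
    ((hWC.fderiv_right (m := (⊤ : ℕ∞)) (by simp)).clm_apply contDiff_const).continuous
  have hfdgC : ∀ i, Continuous (fun x => fderiv ℝ (g i) x (e i)) := fun i =>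
    (((hgC i).fderiv_right (m := (⊤ : ℕ∞)) (by simp)).clm_apply contDiff_const).continuous
  -- vanishing off the support of η
  have hW0 : ∀ x, x ∉ tsupport η → W x = 0 := by
    intro x hx
    have : η x = 0 := image_eq_zero_of_notMem_tsupport hx
    simp [hW, hc, this]
  have hfdW0 : ∀ x, x ∉ tsupport η → fderiv ℝ W x = 0 := by
    intro x hx
    have hop : IsOpen (tsupport η)ᶜ := (isClosed_tsupport η).isOpen_compl
    have hev : W =ᶠ[nhds x] (fun _ => 0) := by
      filter_upwards [hop.mem_nhds hx] with y hy
      exact hW0 y hy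
    rw [hev.fderiv_eq]
    exact fderiv_const_apply 0
  have integrable_of : ∀ (φ : EuclideanSpace ℝ (Fin m) → ℝ), Continuous φ →
      (∀ x, x ∉ tsupport η → φ x = 0) → Integrable φ := fun φ hφ h0 =>
    hφ.integrable_of_hasCompactSupport (HasCompactSupport.intro hηsupp h0)
  have hcontW : Continuous W := hWC.continuous
  have hcontg : ∀ i, Continuous (g i) := fun i => (hgC i).continuous
  have int1 : ∀ i, Integrable (fun x => innerB n (fderiv ℝ W x (e i)) (g i x)) := by
    intro i
    refine integrable_of _ ?_ ?_
    · simp only [innerB_apply]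
      exact (hfdWC i).inner (hcontg i)
    · intro x hx
      simp only [innerB_apply, hfdW0 x hx]
      simp
  have int2 : ∀ i, Integrable (fun x => innerB n (W x) (fderiv ℝ (g i) x (e i))) := by
    intro i
    refine integrable_of _ ?_ ?_
    · simp only [innerB_apply]
      exact hcontW.inner (hfdgC i)
    · intro x hx
      simp only [innerB_apply, hW0 x hx]
      simp
  have int3 : ∀ i, Integrable (fun x => innerB n (W x) (g i x)) := by
    intro i
    refine integrable_of _ ?_ ?_
    · simp only [innerB_apply]
      exact hcontW.inner (hcontg i)
    · intro x hx
      simp only [innerB_apply, hW0 x hx]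
      simp
  have hWdiff : Differentiable ℝ W := fun x => (hWd x).differentiableAt
  have hgdiff : ∀ i, Differentiable ℝ (g i) := fun i => (hgC i).differentiable (by simp)
  have ibp : ∀ i, ∫ x, innerB n (W x) (fderiv ℝ (g i) x (e i))
      = - ∫ x, innerB n (fderiv ℝ W x (e i)) (g i x) := fun i =>
    integral_bilinear_fderiv_right_eq_neg_left_of_integrable (int1 i) (int2 i) (int3 i)
      (fun x _ => hWdiff x) (fun x _ => hgdiff i x)
  have ibp' : ∀ i, ∫ x, innerB n (fderiv ℝ W x (e i)) (g i x)
      = - ∫ x, innerB n (W x) (fderiv ℝ (g i) x (e i)) := by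
    intro i
    rw [ibp i, neg_neg]
  have sumzero : ∑ i : Fin m, ∫ x, innerB n (fderiv ℝ W x (e i)) (g i x) = 0 := by
    have h2 : ∑ i : Fin m, ∫ x, innerB n (W x) (fderiv ℝ (g i) x (e i))
        = ∫ x, ∑ i : Fin m, innerB n (W x) (fderiv ℝ (g i) x (e i)) :=
      (integral_finset_sum _ (fun i _ => int2 i)).symm
    have h3 : ∀ x, ∑ i : Fin m, innerB n (W x) (fderiv ℝ (g i) x (e i)) = 0 := by
      intro x
      simp only [innerB_apply]
      rw [← inner_sum]
      have hl : (∑ i : Fin m, fderiv ℝ (g i) x (e i)) = lapE V x := rfl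
      rw [hl, hharm x, inner_zero_right]
    have hz : ∑ i : Fin m, ∫ x, innerB n (W x) (fderiv ℝ (g i) x (e i)) = 0 := by
      rw [h2]
      simp [h3]
    simp only [ibp']
    rw [Finset.sum_neg_distrib, neg_eq_zero]
    exact hz
  have hGix : ∀ (i : Fin m) x, innerB n (fderiv ℝ W x (e i)) (g i x)
      = c x * ‖g i x‖ ^ 2
        + (η x ^ 2 * (q * s x ^ (q - 1) * (2 * inner ℝ (V x) (g i x)))
           + ρ x * (2 * η x * fderiv ℝ η x (e i))) * inner ℝ (V x) (g i x) := by
    intro i x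
    rw [show fderiv ℝ W x = c x • fderiv ℝ V x + (cd x).smulRight (V x) from (hWd x).fderiv]
    simp only [innerB_apply, hcd, hDs, ContinuousLinearMap.add_apply,
      ContinuousLinearMap.coe_smul', Pi.smul_apply, ContinuousLinearMap.smulRight_apply,
      ContinuousLinearMap.comp_apply, innerSL_apply_apply, ContinuousLinearMap.smul_apply,
      inner_add_left, real_inner_smul_left, real_inner_self_eq_norm_sq, smul_eq_mul, hg]
    ring
  -- pointwise key inequality
  have per_i : ∀ (x : EuclideanSpace ℝ (Fin m)) (i : Fin m),
      (1/2) * (η x ^ 2 * ρ x * ‖g i x‖ ^ 2)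
        - 2 * ρ x * ‖V x‖ ^ 2 * (fderiv ℝ η x (e i)) ^ 2
      ≤ innerB n (fderiv ℝ W x (e i)) (g i x) := by
    intro x i
    rw [hGix i x]
    simp only [hc]
    set a : ℝ := inner ℝ (V x) (g i x) with ha'
    set D : ℝ := fderiv ℝ η x (e i) with hD'
    have ha : |a| ≤ ‖V x‖ * ‖g i x‖ := abs_real_inner_le_norm _ _
    have e1 : -(2 * η x * D * a) ≤ 2 * (|η x| * |D|) * (‖V x‖ * ‖g i x‖) := by
      calc -(2 * η x * D * a) ≤ |2 * η x * D * a| := neg_le_abs _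
        _ = 2 * (|η x| * |D|) * |a| := by
            rw [abs_mul, abs_mul, abs_mul, abs_two]; ring
        _ ≤ 2 * (|η x| * |D|) * (‖V x‖ * ‖g i x‖) := by
            have h2 : (0:ℝ) ≤ 2 * (|η x| * |D|) := by positivity
            exact mul_le_mul_of_nonneg_left ha h2
    have h1 : 0 ≤ (1/2) * (η x ^ 2 * ‖g i x‖ ^ 2) + 2 * ‖V x‖ ^ 2 * D ^ 2
        + 2 * η x * D * a := by
      nlinarith [sq_nonneg (|η x| * ‖g i x‖ - 2 * (|D| * ‖V x‖)), e1,
        sq_abs (η x), sq_abs D]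
    have h2 : 0 ≤ ρ x * ((1/2) * (η x ^ 2 * ‖g i x‖ ^ 2) + 2 * ‖V x‖ ^ 2 * D ^ 2
        + 2 * η x * D * a) := mul_nonneg (hρ0 x) h1
    have h3 : 0 ≤ 2 * q * s x ^ (q - 1) * η x ^ 2 * a ^ 2 := by
      have := Real.rpow_nonneg (hspos x).le (q - 1)
      positivity
    nlinarith [h2, h3]
  have key : ∀ x, (1/2) * (η x ^ 2 * ρ x * ∑ i : Fin m, ‖g i x‖ ^ 2)
      ≤ (∑ i : Fin m, innerB n (fderiv ℝ W x (e i)) (g i x))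
        + 2 * (s x ^ (q + 1) * ‖fderiv ℝ η x‖ ^ 2) := by
    intro x
    have hsum := Finset.sum_le_sum (fun i (_ : i ∈ Finset.univ) => per_i x i)
    have eq1 : ∑ i : Fin m, ((1/2) * (η x ^ 2 * ρ x * ‖g i x‖ ^ 2)
        - 2 * ρ x * ‖V x‖ ^ 2 * (fderiv ℝ η x (e i)) ^ 2)
        = (1/2) * (η x ^ 2 * ρ x * ∑ i : Fin m, ‖g i x‖ ^ 2)
          - 2 * ρ x * ‖V x‖ ^ 2 * (∑ i : Fin m, (fderiv ℝ η x (e i)) ^ 2) := by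
      rw [Finset.sum_sub_distrib, Finset.mul_sum, Finset.mul_sum, Finset.mul_sum]
    rw [eq1] at hsum
    have hD : ∑ i : Fin m, (fderiv ℝ η x (e i)) ^ 2 ≤ ‖fderiv ℝ η x‖ ^ 2 := by
      rw [he]
      exact sum_sq_apply_le m (fderiv ℝ η x)
    have hρV : ρ x * ‖V x‖ ^ 2 ≤ s x ^ (q + 1) := by
      have h5 : s x ^ (q + 1) = s x ^ q * s x := Real.rpow_add_one (hspos x).ne' q
      rw [h5]
      have : ‖V x‖ ^ 2 ≤ s x := by simp [hs]; positivity
      exact mul_le_mul_of_nonneg_left this (hρ0 x)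
    have hbound : 2 * ρ x * ‖V x‖ ^ 2 * (∑ i : Fin m, (fderiv ℝ η x (e i)) ^ 2)
        ≤ 2 * (s x ^ (q + 1) * ‖fderiv ℝ η x‖ ^ 2) := by
      have hnn1 : 0 ≤ ∑ i : Fin m, (fderiv ℝ η x (e i)) ^ 2 :=
        Finset.sum_nonneg fun i _ => sq_nonneg _
      have hnn2 : 0 ≤ ρ x * ‖V x‖ ^ 2 := mul_nonneg (hρ0 x) (sq_nonneg _)
      nlinarith [mul_le_mul hρV hD hnn1 (Real.rpow_nonneg (hspos x).le (q + 1))]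
    linarith
  -- integrability of the integrands in `key`
  have intM : Integrable (fun x => η x ^ 2 * ρ x * ∑ i : Fin m, ‖g i x‖ ^ 2) := by
    refine integrable_of _ ?_ ?_
    · exact ((hη.continuous.pow 2).mul hρC.continuous).mul
        (continuous_finset_sum _ fun i _ => ((hcontg i).norm.pow 2))
    · intro x hx
      simp [image_eq_zero_of_notMem_tsupport hx]
  have intR : Integrable (fun x => s x ^ (q + 1) * ‖fderiv ℝ η x‖ ^ 2) := by
    refine integrable_of _ ?_ ?_
    · exact (hsC.rpow_const_of_ne (fun x => (hspos x).ne')).continuous.mul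
        (((hη.fderiv_right (m := (⊤ : ℕ∞)) (by simp)).continuous.norm).pow 2)
    · intro x hx
      have hx0 : fderiv ℝ η x = 0 := by
        by_contra h
        exact hx (support_fderiv_subset ℝ (Function.mem_support.2 h))
      simp [hx0]
  have intG : Integrable (fun x => ∑ i : Fin m, innerB n (fderiv ℝ W x (e i)) (g i x)) :=
    integrable_finset_sum _ (fun i _ => int1 i)
  have intGzero : ∫ x, (∑ i : Fin m, innerB n (fderiv ℝ W x (e i)) (g i x)) = 0 := by
    rw [integral_finset_sum _ (fun i _ => int1 i)]
    exact sumzero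
  have main : ∫ x, (1/2) * (η x ^ 2 * ρ x * ∑ i : Fin m, ‖g i x‖ ^ 2)
      ≤ ∫ x, ((∑ i : Fin m, innerB n (fderiv ℝ W x (e i)) (g i x))
        + 2 * (s x ^ (q + 1) * ‖fderiv ℝ η x‖ ^ 2)) :=
    integral_mono (intM.const_mul _) (intG.add (intR.const_mul 2)) key
  rw [integral_add intG (intR.const_mul 2), intGzero, zero_add,
    integral_const_mul, integral_const_mul] at main
  have hfin : ∫ x, η x ^ 2 * ρ x * ∑ i : Fin m, ‖g i x‖ ^ 2
      ≤ 4 * ∫ x, s x ^ (q + 1) * ‖fderiv ℝ η x‖ ^ 2 := by linarith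
  exact hfin

set_option maxHeartbeats 1000000 in
/-- the case `p ≥ 2` of Lemma 2.1 in the Euclidean, flat-target model:
for a smooth map `V : ℝ^m → ℝ^n` with `ΔV = 0` and a smooth compactly supported cutoff `η`,
`(1/2) ∫ η² (‖V‖²+δ)^((p-4)/2) ‖DV‖² ‖V‖² ≤ 2 ∫ (‖V‖²+δ)^(p/2) ‖∇η‖²`. -/
theorem lemma_two_one_p_ge_two
    (m n : ℕ) (hm : 1 ≤ m) (hn : 1 ≤ n) (p : ℝ) (hp : 2 ≤ p) (δ : ℝ) (hδ : 0 < δ)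
    (V : EuclideanSpace ℝ (Fin m) → EuclideanSpace ℝ (Fin n))
    (hV : ContDiff ℝ (⊤ : ℕ∞) V) (hharm : ∀ x, lapE V x = 0)
    (η : EuclideanSpace ℝ (Fin m) → ℝ)
    (hη : ContDiff ℝ (⊤ : ℕ∞) η) (hηsupp : HasCompactSupport η) :
    (1 / 2) * ∫ x, η x ^ 2 * (‖V x‖ ^ 2 + δ) ^ ((p - 4) / 2) *
        (∑ i : Fin m, ‖fderiv ℝ V x (EuclideanSpace.single i 1)‖ ^ 2) * ‖V x‖ ^ 2
      ≤ 2 * ∫ x, (‖V x‖ ^ 2 + δ) ^ (p / 2) * ‖fderiv ℝ η x‖ ^ 2 := by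
  have hq : 0 ≤ (p - 2) / 2 := by linarith
  have hspos : ∀ x : EuclideanSpace ℝ (Fin m), 0 < ‖V x‖ ^ 2 + δ := fun x => by positivity
  have hcore := core m n ((p - 2) / 2) hq δ hδ V hV hharm η hη hηsupp
  have hexp : (p - 2) / 2 + 1 = p / 2 := by ring
  rw [hexp] at hcore
  -- integrability facts
  have hsC : ContDiff ℝ (⊤ : ℕ∞) (fun x : EuclideanSpace ℝ (Fin m) => ‖V x‖ ^ 2 + δ) :=
    (hV.norm_sq ℝ).add contDiff_const
  have hSC : Continuous (fun x : EuclideanSpace ℝ (Fin m) =>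
      ∑ i : Fin m, ‖fderiv ℝ V x (EuclideanSpace.single i 1)‖ ^ 2) :=
    continuous_finset_sum _ fun i _ =>
      (((hV.fderiv_right (m := (⊤ : ℕ∞)) (by simp)).clm_apply contDiff_const).continuous.norm.pow 2)
  have integrable_of : ∀ (φ : EuclideanSpace ℝ (Fin m) → ℝ), Continuous φ →
      (∀ x, x ∉ tsupport η → φ x = 0) → Integrable φ := fun φ hφ h0 =>
    hφ.integrable_of_hasCompactSupport (HasCompactSupport.intro hηsupp h0)
  have intL : Integrable (fun x => η x ^ 2 * (‖V x‖ ^ 2 + δ) ^ ((p - 4) / 2) *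
      (∑ i : Fin m, ‖fderiv ℝ V x (EuclideanSpace.single i 1)‖ ^ 2) * ‖V x‖ ^ 2) := by
    refine integrable_of _ ?_ ?_
    · exact (((hη.continuous.pow 2).mul
        (hsC.rpow_const_of_ne (fun x => (hspos x).ne')).continuous).mul hSC).mul
        (hV.continuous.norm.pow 2)
    · intro x hx
      simp [image_eq_zero_of_notMem_tsupport hx]
  have intM : Integrable (fun x => η x ^ 2 * (‖V x‖ ^ 2 + δ) ^ ((p - 2) / 2) *
      (∑ i : Fin m, ‖fderiv ℝ V x (EuclideanSpace.single i 1)‖ ^ 2)) := by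
    refine integrable_of _ ?_ ?_
    · exact ((hη.continuous.pow 2).mul
        (hsC.rpow_const_of_ne (fun x => (hspos x).ne')).continuous).mul hSC
    · intro x hx
      simp [image_eq_zero_of_notMem_tsupport hx]
  -- pointwise comparison
  have hpt : ∀ x, η x ^ 2 * (‖V x‖ ^ 2 + δ) ^ ((p - 4) / 2) *
      (∑ i : Fin m, ‖fderiv ℝ V x (EuclideanSpace.single i 1)‖ ^ 2) * ‖V x‖ ^ 2
      ≤ η x ^ 2 * (‖V x‖ ^ 2 + δ) ^ ((p - 2) / 2) *
      (∑ i : Fin m, ‖fderiv ℝ V x (EuclideanSpace.single i 1)‖ ^ 2) := by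
    intro x
    have h1 : (‖V x‖ ^ 2 + δ) ^ ((p - 4) / 2) * ‖V x‖ ^ 2
        ≤ (‖V x‖ ^ 2 + δ) ^ ((p - 2) / 2) := by
      have hb : ‖V x‖ ^ 2 ≤ ‖V x‖ ^ 2 + δ := by linarith
      calc (‖V x‖ ^ 2 + δ) ^ ((p - 4) / 2) * ‖V x‖ ^ 2
          ≤ (‖V x‖ ^ 2 + δ) ^ ((p - 4) / 2) * (‖V x‖ ^ 2 + δ) :=
            mul_le_mul_of_nonneg_left hb (Real.rpow_nonneg (hspos x).le _)
        _ = (‖V x‖ ^ 2 + δ) ^ ((p - 4) / 2 + 1) :=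
            (Real.rpow_add_one (hspos x).ne' _).symm
        _ = (‖V x‖ ^ 2 + δ) ^ ((p - 2) / 2) := by norm_num; ring_nf
    calc η x ^ 2 * (‖V x‖ ^ 2 + δ) ^ ((p - 4) / 2) *
          (∑ i : Fin m, ‖fderiv ℝ V x (EuclideanSpace.single i 1)‖ ^ 2) * ‖V x‖ ^ 2
        = (η x ^ 2 * ∑ i : Fin m, ‖fderiv ℝ V x (EuclideanSpace.single i 1)‖ ^ 2)
          * ((‖V x‖ ^ 2 + δ) ^ ((p - 4) / 2) * ‖V x‖ ^ 2) := by ring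
      _ ≤ (η x ^ 2 * ∑ i : Fin m, ‖fderiv ℝ V x (EuclideanSpace.single i 1)‖ ^ 2)
          * (‖V x‖ ^ 2 + δ) ^ ((p - 2) / 2) := by
          refine mul_le_mul_of_nonneg_left h1 ?_
          have : (0:ℝ) ≤ ∑ i : Fin m, ‖fderiv ℝ V x (EuclideanSpace.single i 1)‖ ^ 2 :=
            Finset.sum_nonneg fun i _ => sq_nonneg _
          positivity
      _ = η x ^ 2 * (‖V x‖ ^ 2 + δ) ^ ((p - 2) / 2) *
          (∑ i : Fin m, ‖fderiv ℝ V x (EuclideanSpace.single i 1)‖ ^ 2) := by ring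
  have hmono := integral_mono intL intM hpt
  linarith
end

section
/- Let m, n ≥ 1, 1 < p < 2 and δ > 0. Let V : ℝ^m → ℝ^n be a smooth map with ΔV = 0 (Δ the componentwise Euclidean Laplacian), and let η : ℝ^m → ℝ be a smooth compactly supported function. Then ∫_{ℝ^m} η(x)² (‖V(x)‖² + δ)^{(p-4)/2} ‖DV(x)‖² ‖V(x)‖² dx ≤ (4/(p-1)²) ∫_{ℝ^m} (‖V(x)‖² + δ)^{p/2} ‖∇η(x)‖² dx, where ‖DV(x)‖² = ∑_{i=1}^m ‖∂V/∂x_i(x)‖² is the squared Hilbert–Schmidt norm of the derivative. -/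
open MeasureTheory Set
open scoped RealInnerProductSpace


lemma pi_div_integral_zero {k : ℕ}
    (f : Fin (k+1) → (Fin (k+1) → ℝ) → ℝ)
    (hf : ∀ i, ContDiff ℝ (⊤ : ℕ∞) (f i)) (hsupp : ∀ i, HasCompactSupport (f i)) :
    ∫ x, ∑ i, fderiv ℝ (f i) x (Pi.single i 1) = 0 := by
  obtain ⟨R, hR0, hR⟩ : ∃ R : ℝ, 0 < R ∧ ∀ i, tsupport (f i) ⊆ Metric.closedBall 0 R := by
    have : IsCompact (⋃ i, tsupport (f i)) := isCompact_iUnion fun i => hsupp i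
    obtain ⟨R, hR⟩ := this.isBounded.subset_closedBall 0
    exact ⟨max R 1, lt_of_lt_of_le one_pos (le_max_right _ _),
      fun i => (subset_iUnion (fun i => tsupport (f i)) i).trans
        (hR.trans (Metric.closedBall_subset_closedBall (le_max_left _ _)))⟩
  set a : Fin (k+1) → ℝ := fun _ => -(R+1) with ha
  set b : Fin (k+1) → ℝ := fun _ => (R+1) with hb
  have hle : a ≤ b := fun i => by simp only [ha, hb]; linarith
  have hzero : ∀ i (x : Fin (k+1) → ℝ), R < ‖x‖ → f i x = 0 := by
    intro i x hx
    apply image_eq_zero_of_notMem_tsupport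
    intro hmem
    exact absurd (mem_closedBall_zero_iff.1 (hR i hmem)) (not_le.2 hx)
  have hderzero : ∀ (x : Fin (k+1) → ℝ), x ∉ Icc a b →
      (∑ i, fderiv ℝ (f i) x (Pi.single i 1)) = 0 := by
    intro x hx
    have hxnorm : R < ‖x‖ := by
      by_contra h
      push_neg at h
      refine hx ⟨fun i => ?_, fun i => ?_⟩ <;>
      · have h1 : |x i| ≤ R := le_trans (by simpa using norm_le_pi_norm x i) h
        have := abs_le.1 h1
        simp only [ha, hb]
        linarith [this.1, this.2]
    refine Finset.sum_eq_zero fun i _ => ?_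
    have h0 : fderiv ℝ (f i) x = 0 := by
      by_contra h
      have hm : x ∈ Function.support (fderiv ℝ (f i)) := h
      have := support_fderiv_subset ℝ (f := f i) hm
      exact absurd (mem_closedBall_zero_iff.1 (hR i this)) (not_le.2 hxnorm)
    simp [h0]
  -- reduce to the box
  have hcont : Continuous fun x => ∑ i, fderiv ℝ (f i) x (Pi.single i 1) := by
    exact continuous_finset_sum _ fun i _ =>
      (((hf i).fderiv_right (m := (⊤ : ℕ∞)) le_rfl).continuous).clm_apply continuous_const
  have hbox : (∫ x, ∑ i, fderiv ℝ (f i) x (Pi.single i 1))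
      = ∫ x in Icc a b, ∑ i, fderiv ℝ (f i) x (Pi.single i 1) :=
    (setIntegral_eq_integral_of_forall_compl_eq_zero fun x hx => hderzero x hx).symm
  rw [hbox]
  have hdiv := integral_divergence_of_hasFDerivAt_off_countable' a b hle
      f (fun i x => fderiv ℝ (f i) x) ∅ countable_empty
      (fun i => ((hf i).continuous).continuousOn)
      (fun x _ i => (((hf i).differentiable (by simp)) x).hasFDerivAt)
      (hcont.continuousOn.integrableOn_compact isCompact_Icc)
  rw [hdiv]
  refine Finset.sum_eq_zero fun i _ => ?_
  have hface : ∀ (c : ℝ), R < |c| → ∀ (y : Fin k → ℝ),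
      f i (Fin.insertNth (α := fun _ => ℝ) i c y) = 0 := by
    intro c hc y
    apply hzero
    calc R < |c| := hc
    _ = ‖(Fin.insertNth (α := fun _ => ℝ) i c y) i‖ := by rw [Fin.insertNth_apply_same]; rfl
    _ ≤ ‖Fin.insertNth (α := fun _ => ℝ) i c y‖ := norm_le_pi_norm (Fin.insertNth (α := fun _ => ℝ) i c y) i
  have h1 : ∀ y : Fin k → ℝ, f i (Fin.insertNth (α := fun _ => ℝ) i (b i) y) = 0 :=
    hface (b i) (by simp [hb]; rw [abs_of_pos (by linarith)]; linarith)
  have h2 : ∀ y : Fin k → ℝ, f i (Fin.insertNth (α := fun _ => ℝ) i (a i) y) = 0 :=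
    hface (a i) (by simp only [ha]; rw [abs_of_neg (by linarith)]; linarith)
  simp [h1, h2]

lemma euclid_div_integral_zero {m : ℕ} (hm : 0 < m)
    (f : Fin m → EuclideanSpace ℝ (Fin m) → ℝ)
    (hf : ∀ i, ContDiff ℝ (⊤ : ℕ∞) (f i)) (hsupp : ∀ i, HasCompactSupport (f i)) :
    ∫ x, ∑ i, fderiv ℝ (f i) x (EuclideanSpace.single i 1) = 0 := by
  obtain ⟨k, rfl⟩ := Nat.exists_eq_succ_of_ne_zero hm.ne'
  set eL : EuclideanSpace ℝ (Fin (k+1)) ≃L[ℝ] (Fin (k+1) → ℝ) :=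
    EuclideanSpace.equiv (Fin (k+1)) ℝ with heL
  set g : Fin (k+1) → (Fin (k+1) → ℝ) → ℝ := fun i => (f i) ∘ eL.symm with hg
  have hsingle : ∀ i : Fin (k+1), eL.symm (Pi.single i 1) = EuclideanSpace.single i 1 := by
    intro i; rfl
  have hkey : ∀ y : Fin (k+1) → ℝ, ∀ i,
      fderiv ℝ (g i) y (Pi.single i 1) = fderiv ℝ (f i) (eL.symm y) (EuclideanSpace.single i 1) := by
    intro y i
    rw [hg]
    rw [ContinuousLinearEquiv.comp_right_fderiv (iso := eL.symm)]
    simp [hsingle]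
  have hmp := (EuclideanSpace.volume_preserving_symm_measurableEquiv_toLp (Fin (k+1))).symm
  have htrans : ∫ x : EuclideanSpace ℝ (Fin (k+1)), ∑ i, fderiv ℝ (f i) x (EuclideanSpace.single i 1)
      = ∫ y : Fin (k+1) → ℝ, ∑ i, fderiv ℝ (g i) y (Pi.single i 1) := by
    rw [← hmp.integral_comp (MeasurableEquiv.toLp 2 (Fin (k+1) → ℝ)).measurableEmbedding]
    congr 1
    ext y
    refine Finset.sum_congr rfl fun i _ => ?_
    rw [hkey y i]
    rfl
  rw [htrans]
  exact pi_div_integral_zero g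
    (fun i => (hf i).comp eL.symm.contDiff)
    (fun i => (hsupp i).comp_homeomorph eL.symm.toHomeomorph)


section Aux

variable {m n : ℕ} {p δ : ℝ}

/-- squared norm of a functional on Euclidean space via coordinates -/
lemma sum_sq_apply_single (ℓ : EuclideanSpace ℝ (Fin m) →L[ℝ] ℝ) :
    ∑ i, (ℓ (EuclideanSpace.single i 1)) ^ 2 = ‖ℓ‖ ^ 2 := by
  set v : EuclideanSpace ℝ (Fin m) :=
    (InnerProductSpace.toDual ℝ (EuclideanSpace ℝ (Fin m))).symm ℓ with hv
  have happ : ∀ u, ℓ u = ⟪v, u⟫ := fun u => (InnerProductSpace.toDual_symm_apply).symm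
  have hnorm : ‖ℓ‖ = ‖v‖ := by
    rw [hv, LinearIsometryEquiv.norm_map]
  rw [hnorm]
  have h1 : ∀ i : Fin m, ℓ (EuclideanSpace.single i 1) = v i := by
    intro i
    rw [happ]
    simpa using EuclideanSpace.inner_single_right (𝕜 := ℝ) i 1 v
  simp only [h1]
  have h2 : ‖v‖ = Real.sqrt (∑ i, ‖v i‖ ^ 2) := EuclideanSpace.norm_eq v
  rw [h2, Real.sq_sqrt (by positivity)]
  simp [Real.norm_eq_abs, sq_abs]

variable (p δ)
variable (V : EuclideanSpace ℝ (Fin m) → EuclideanSpace ℝ (Fin n))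
variable (η : EuclideanSpace ℝ (Fin m) → ℝ)

noncomputable def QF : EuclideanSpace ℝ (Fin m) → ℝ :=
  fun x => ∑ i, ‖fderiv ℝ V x (EuclideanSpace.single i 1)‖ ^ 2

noncomputable def AF : EuclideanSpace ℝ (Fin m) → ℝ :=
  fun x => ∑ i, (⟪fderiv ℝ V x (EuclideanSpace.single i 1), V x⟫) ^ 2

noncomputable def BF : EuclideanSpace ℝ (Fin m) → ℝ :=
  fun x => ∑ i, fderiv ℝ η x (EuclideanSpace.single i 1) *
    ⟪fderiv ℝ V x (EuclideanSpace.single i 1), V x⟫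

noncomputable def fF (i : Fin m) : EuclideanSpace ℝ (Fin m) → ℝ :=
  fun x => η x ^ 2 * (‖V x‖ ^ 2 + δ) ^ ((p - 2) / 2) *
    ⟪fderiv ℝ V x (EuclideanSpace.single i 1), V x⟫

variable {V η}

lemma QF_nonneg (x) : 0 ≤ QF V x := Finset.sum_nonneg fun i _ => by positivity

lemma AF_le (x) : AF V x ≤ QF V x * ‖V x‖ ^ 2 := by
  rw [QF, AF, Finset.sum_mul]
  refine Finset.sum_le_sum fun i _ => ?_
  have h := abs_real_inner_le_norm (fderiv ℝ V x (EuclideanSpace.single i 1)) (V x)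
  calc (⟪fderiv ℝ V x (EuclideanSpace.single i 1), V x⟫) ^ 2
      = |⟪fderiv ℝ V x (EuclideanSpace.single i 1), V x⟫| ^ 2 := (sq_abs _).symm
    _ ≤ (‖fderiv ℝ V x (EuclideanSpace.single i 1)‖ * ‖V x‖) ^ 2 := by
        apply pow_le_pow_left₀ (abs_nonneg _) h
    _ = ‖fderiv ℝ V x (EuclideanSpace.single i 1)‖ ^ 2 * ‖V x‖ ^ 2 := by ring

lemma BF_sq_le (x) : (BF V η x) ^ 2 ≤ ‖fderiv ℝ η x‖ ^ 2 * AF V x := by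
  rw [BF, AF]
  have := Finset.sum_mul_sq_le_sq_mul_sq Finset.univ
    (fun i => fderiv ℝ η x (EuclideanSpace.single i 1))
    (fun i => ⟪fderiv ℝ V x (EuclideanSpace.single i 1), V x⟫)
  rwa [sum_sq_apply_single (fderiv ℝ η x)] at this

variable (hδ : 0 < δ) (hV : ContDiff ℝ (⊤ : ℕ∞) V) (hη : ContDiff ℝ (⊤ : ℕ∞) η)
include hδ hV hη

lemma div_identity (x : EuclideanSpace ℝ (Fin m)) :
    ∑ i, fderiv ℝ (fF p δ V η i) x (EuclideanSpace.single i 1)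
      = 2 * η x * (‖V x‖ ^ 2 + δ) ^ ((p - 2) / 2) * BF V η x
        + (p - 2) * η x ^ 2 * (‖V x‖ ^ 2 + δ) ^ ((p - 4) / 2) * AF V x
        + η x ^ 2 * (‖V x‖ ^ 2 + δ) ^ ((p - 2) / 2) * QF V x
        + η x ^ 2 * (‖V x‖ ^ 2 + δ) ^ ((p - 2) / 2) * ⟪lapE V x, V x⟫ := by
  have hwpos : 0 < ‖V x‖ ^ 2 + δ := by positivity
  have hVx : HasFDerivAt V (fderiv ℝ V x) x := (hV.differentiable (by simp) x).hasFDerivAt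
  have hηx : HasFDerivAt η (fderiv ℝ η x) x := (hη.differentiable (by simp) x).hasFDerivAt
  have hw : HasFDerivAt (fun y => ‖V y‖ ^ 2 + δ)
      ((fderivInnerCLM ℝ (V x, V x)).comp ((fderiv ℝ V x).prod (fderiv ℝ V x))) x := by
    have := (hVx.inner ℝ hVx).add_const δ
    simpa only [real_inner_self_eq_norm_sq] using this
  have hψ : HasFDerivAt (fun y => (‖V y‖ ^ 2 + δ) ^ ((p - 2) / 2))
      (((p - 2) / 2 * (‖V x‖ ^ 2 + δ) ^ ((p - 2) / 2 - 1)) •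
        ((fderivInnerCLM ℝ (V x, V x)).comp ((fderiv ℝ V x).prod (fderiv ℝ V x)))) x :=
    hw.rpow_const (Or.inl hwpos.ne')
  have hφ : HasFDerivAt (fun y => η y ^ 2)
      (η x • fderiv ℝ η x + η x • fderiv ℝ η x) x := by
    exact (hηx.mul hηx).congr_of_eventuallyEq (Filter.Eventually.of_forall fun y => pow_two (η y))
  have hU : ∀ i : Fin m, HasFDerivAt (fun y => fderiv ℝ V y (EuclideanSpace.single i 1))
      (fderiv ℝ (fun y => fderiv ℝ V y (EuclideanSpace.single i 1)) x) x := fun i =>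
    ((((hV.fderiv_right (m := (⊤ : ℕ∞)) (by simp)).clm_apply contDiff_const).differentiable (by simp)) x).hasFDerivAt
  have key : ∀ i : Fin m, fderiv ℝ (fF p δ V η i) x (EuclideanSpace.single i 1) =
      η x ^ 2 * (‖V x‖ ^ 2 + δ) ^ ((p - 2) / 2) * ‖fderiv ℝ V x (EuclideanSpace.single i 1)‖ ^ 2
      + η x ^ 2 * (‖V x‖ ^ 2 + δ) ^ ((p - 2) / 2) *
          ⟪fderiv ℝ (fun y => fderiv ℝ V y (EuclideanSpace.single i 1)) x
            (EuclideanSpace.single i 1), V x⟫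
      + (p - 2) * η x ^ 2 * (‖V x‖ ^ 2 + δ) ^ ((p - 4) / 2) *
          (⟪fderiv ℝ V x (EuclideanSpace.single i 1), V x⟫) ^ 2
      + 2 * η x * (‖V x‖ ^ 2 + δ) ^ ((p - 2) / 2) *
          (fderiv ℝ η x (EuclideanSpace.single i 1) *
            ⟪fderiv ℝ V x (EuclideanSpace.single i 1), V x⟫) := by
    intro i
    have hχ := (hU i).inner ℝ hVx
    have hfi := (hφ.mul hψ).mul hχ
    have hfd := hfi.fderiv
    have : fderiv ℝ (fF p δ V η i) x =
        (η x ^ 2 * (‖V x‖ ^ 2 + δ) ^ ((p - 2) / 2)) •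
            ((fderivInnerCLM ℝ (fderiv ℝ V x (EuclideanSpace.single i 1), V x)).comp
              ((fderiv ℝ (fun y => fderiv ℝ V y (EuclideanSpace.single i 1)) x).prod
                (fderiv ℝ V x)))
          + (⟪fderiv ℝ V x (EuclideanSpace.single i 1), V x⟫) •
            ((η x ^ 2) • (((p - 2) / 2 * (‖V x‖ ^ 2 + δ) ^ ((p - 2) / 2 - 1)) •
                ((fderivInnerCLM ℝ (V x, V x)).comp ((fderiv ℝ V x).prod (fderiv ℝ V x))))
              + ((‖V x‖ ^ 2 + δ) ^ ((p - 2) / 2)) •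
                (η x • fderiv ℝ η x + η x • fderiv ℝ η x)) := hfd
    rw [this]
    have hexp : (p - 2) / 2 - 1 = (p - 4) / 2 := by ring
    simp only [ContinuousLinearMap.add_apply, ContinuousLinearMap.coe_smul', Pi.smul_apply,
      ContinuousLinearMap.comp_apply, ContinuousLinearMap.prod_apply, fderivInnerCLM_apply,
      smul_eq_mul, hexp]
    rw [real_inner_comm (V x) (fderiv ℝ V x (EuclideanSpace.single i 1)),
      real_inner_self_eq_norm_sq (fderiv ℝ V x (EuclideanSpace.single i 1))]
    ring
  rw [Finset.sum_congr rfl fun i _ => key i]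
  rw [Finset.sum_add_distrib, Finset.sum_add_distrib, Finset.sum_add_distrib]
  have h1 : ∑ i : Fin m, η x ^ 2 * (‖V x‖ ^ 2 + δ) ^ ((p - 2) / 2) *
      ‖fderiv ℝ V x (EuclideanSpace.single i 1)‖ ^ 2
      = η x ^ 2 * (‖V x‖ ^ 2 + δ) ^ ((p - 2) / 2) * QF V x := by
    rw [QF, Finset.mul_sum]
  have h2 : ∑ i : Fin m, η x ^ 2 * (‖V x‖ ^ 2 + δ) ^ ((p - 2) / 2) *
      ⟪fderiv ℝ (fun y => fderiv ℝ V y (EuclideanSpace.single i 1)) x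
        (EuclideanSpace.single i 1), V x⟫
      = η x ^ 2 * (‖V x‖ ^ 2 + δ) ^ ((p - 2) / 2) * ⟪lapE V x, V x⟫ := by
    rw [← Finset.mul_sum, lapE, sum_inner]
  have h3 : ∑ i : Fin m, (p - 2) * η x ^ 2 * (‖V x‖ ^ 2 + δ) ^ ((p - 4) / 2) *
      (⟪fderiv ℝ V x (EuclideanSpace.single i 1), V x⟫) ^ 2
      = (p - 2) * η x ^ 2 * (‖V x‖ ^ 2 + δ) ^ ((p - 4) / 2) * AF V x := by
    rw [AF, Finset.mul_sum]
  have h4 : ∑ i : Fin m, 2 * η x * (‖V x‖ ^ 2 + δ) ^ ((p - 2) / 2) *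
      (fderiv ℝ η x (EuclideanSpace.single i 1) *
        ⟪fderiv ℝ V x (EuclideanSpace.single i 1), V x⟫)
      = 2 * η x * (‖V x‖ ^ 2 + δ) ^ ((p - 2) / 2) * BF V η x := by
    rw [BF, Finset.mul_sum]
  rw [h1, h2, h3, h4]
  ring

end Aux

set_option maxHeartbeats 1000000 in
/-- the case `1 < p < 2` of Lemma 2.1 in the Euclidean, flat-target model:
for a smooth map `V : ℝ^m → ℝ^n` with `ΔV = 0` and a smooth compactly supported cutoff `η`,
`∫ η² (‖V‖²+δ)^((p-4)/2) ‖DV‖² ‖V‖² ≤ (4/(p-1)²) ∫ (‖V‖²+δ)^(p/2) ‖∇η‖²`. -/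
theorem lemma_two_one_p_lt_two
    (m n : ℕ) (hm : 1 ≤ m) (hn : 1 ≤ n) (p : ℝ) (hp1 : 1 < p) (hp2 : p < 2)
    (δ : ℝ) (hδ : 0 < δ)
    (V : EuclideanSpace ℝ (Fin m) → EuclideanSpace ℝ (Fin n))
    (hV : ContDiff ℝ (⊤ : ℕ∞) V) (hharm : ∀ x, lapE V x = 0)
    (η : EuclideanSpace ℝ (Fin m) → ℝ)
    (hη : ContDiff ℝ (⊤ : ℕ∞) η) (hηsupp : HasCompactSupport η) :
    ∫ x, η x ^ 2 * (‖V x‖ ^ 2 + δ) ^ ((p - 4) / 2) *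
        (∑ i : Fin m, ‖fderiv ℝ V x (EuclideanSpace.single i 1)‖ ^ 2) * ‖V x‖ ^ 2
      ≤ (4 / (p - 1) ^ 2) * ∫ x, (‖V x‖ ^ 2 + δ) ^ (p / 2) * ‖fderiv ℝ η x‖ ^ 2 := by
  have hq : (0:ℝ) < p - 1 := by linarith
  have hwpos : ∀ x, 0 < ‖V x‖ ^ 2 + δ := fun x => by positivity
  -- continuity facts
  have hVc : Continuous V := hV.continuous
  have hDVc : Continuous (fderiv ℝ V) := (hV.fderiv_right (m := (⊤ : ℕ∞)) (by simp)).continuous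
  have hdi : ∀ i : Fin m, Continuous fun x => fderiv ℝ V x (EuclideanSpace.single i 1) :=
    fun i => hDVc.clm_apply continuous_const
  have hDηc : Continuous (fderiv ℝ η) := (hη.fderiv_right (m := (⊤ : ℕ∞)) (by simp)).continuous
  have hwc : Continuous fun x => ‖V x‖ ^ 2 + δ := (hVc.norm.pow 2).add continuous_const
  have hwrc : ∀ c : ℝ, Continuous fun x => (‖V x‖ ^ 2 + δ) ^ c := fun c =>
    hwc.rpow_const fun x => Or.inl (hwpos x).ne'
  have hQc : Continuous (QF V) :=
    continuous_finset_sum _ fun i _ => (hdi i).norm.pow 2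
  have hAc : Continuous (AF V) :=
    continuous_finset_sum _ fun i _ => ((hdi i).inner hVc).pow 2
  have hBc : Continuous (BF V η) :=
    continuous_finset_sum _ fun i _ =>
      (hDηc.clm_apply continuous_const).mul ((hdi i).inner hVc)
  have hηc : Continuous η := hη.continuous
  -- compact support helper
  have hdη0 : ∀ x, x ∉ tsupport η → fderiv ℝ η x = 0 := fun x hx => by
    by_contra h; exact hx (support_fderiv_subset ℝ h)
  have hη0 : ∀ x, x ∉ tsupport η → η x = 0 := fun x hx =>
    image_eq_zero_of_notMem_tsupport hx
  have hsub : ∀ g : EuclideanSpace ℝ (Fin m) → ℝ,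
      (∀ x, x ∉ tsupport η → g x = 0) → HasCompactSupport g := fun g hg =>
    hηsupp.mono' fun x hx => by_contra fun h => hx (hg x h)
  -- the four key functions
  set t : EuclideanSpace ℝ (Fin m) → ℝ := fun x =>
    η x ^ 2 * (‖V x‖ ^ 2 + δ) ^ ((p - 4) / 2) * QF V x * ‖V x‖ ^ 2 with ht_def
  set r : EuclideanSpace ℝ (Fin m) → ℝ := fun x =>
    (‖V x‖ ^ 2 + δ) ^ (p / 2) * ‖fderiv ℝ η x‖ ^ 2 with hr_def
  set bb : EuclideanSpace ℝ (Fin m) → ℝ := fun x =>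
    2 * η x * (‖V x‖ ^ 2 + δ) ^ ((p - 2) / 2) * BF V η x with hbb_def
  set u : EuclideanSpace ℝ (Fin m) → ℝ := fun x =>
    (p - 2) * η x ^ 2 * (‖V x‖ ^ 2 + δ) ^ ((p - 4) / 2) * AF V x
      + η x ^ 2 * (‖V x‖ ^ 2 + δ) ^ ((p - 2) / 2) * QF V x with hu_def
  -- integrability
  have htInt : Integrable t := by
    apply Continuous.integrable_of_hasCompactSupport
    · exact (((hηc.pow 2).mul (hwrc _)).mul hQc).mul (hVc.norm.pow 2)
    · exact hsub t fun x hx => by simp [ht_def, hη0 x hx]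
  have hrInt : Integrable r := by
    apply Continuous.integrable_of_hasCompactSupport
    · exact (hwrc _).mul (hDηc.norm.pow 2)
    · exact hsub r fun x hx => by simp [hr_def, hdη0 x hx]
  have hbbInt : Integrable bb := by
    apply Continuous.integrable_of_hasCompactSupport
    · exact ((continuous_const.mul hηc).mul (hwrc _)).mul hBc
    · exact hsub bb fun x hx => by simp [hbb_def, hη0 x hx]
  have huInt : Integrable u := by
    apply Continuous.integrable_of_hasCompactSupport
    · exact (((continuous_const.mul (hηc.pow 2)).mul (hwrc _)).mul hAc).add
        (((hηc.pow 2).mul (hwrc _)).mul hQc)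
    · exact hsub u fun x hx => by simp [hu_def, hη0 x hx]
  -- divergence theorem
  have hwC : ContDiff ℝ (⊤ : ℕ∞) fun x => ‖V x‖ ^ 2 + δ := by
    have h : (fun x => ‖V x‖ ^ 2 + δ) = fun x => (⟪V x, V x⟫ : ℝ) + δ := by
      funext x; rw [real_inner_self_eq_norm_sq]
    rw [h]
    exact (hV.inner (𝕜 := ℝ) hV).add contDiff_const
  have hψC : ContDiff ℝ (⊤ : ℕ∞) fun x => (‖V x‖ ^ 2 + δ) ^ ((p - 2) / 2) :=
    hwC.rpow_const_of_ne fun x => (hwpos x).ne'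
  have hfC : ∀ i, ContDiff ℝ (⊤ : ℕ∞) (fF p δ V η i) := fun i =>
    ((hη.pow 2).mul hψC).mul
      (((hV.fderiv_right (m := (⊤ : ℕ∞)) (by simp)).clm_apply contDiff_const).inner (𝕜 := ℝ) hV)
  have hfS : ∀ i, HasCompactSupport (fF p δ V η i) := fun i =>
    hsub _ fun x hx => by simp [fF, hη0 x hx]
  have hdiv0 : ∫ x, ∑ i, fderiv ℝ (fF p δ V η i) x (EuclideanSpace.single i 1) = 0 :=
    euclid_div_integral_zero hm (fF p δ V η) hfC hfS
  have hptid : (fun x => ∑ i, fderiv ℝ (fF p δ V η i) x (EuclideanSpace.single i 1))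
      = fun x => bb x + u x := by
    funext x
    rw [div_identity p δ hδ hV hη x, hharm x]
    simp only [inner_zero_left]
    simp only [hbb_def, hu_def]
    ring
  rw [hptid] at hdiv0
  have hsplitint : (∫ x, bb x) + ∫ x, u x = 0 := by
    rw [← integral_add hbbInt huInt]; exact hdiv0
  -- pointwise inequality 1 : (p-1) t ≤ u
  have hpt1 : ∀ x, (p - 1) * t x ≤ u x := by
    intro x
    have hA := AF_le (V := V) x
    have hQ := QF_nonneg (V := V) x
    have hsplit : (‖V x‖ ^ 2 + δ) ^ ((p - 2) / 2)
        = (‖V x‖ ^ 2 + δ) ^ ((p - 4) / 2) * (‖V x‖ ^ 2 + δ) := by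
      rw [show (p - 2) / 2 = (p - 4) / 2 + 1 by ring, Real.rpow_add (hwpos x), Real.rpow_one]
    have hkey : (p - 1) * (QF V x * ‖V x‖ ^ 2)
        ≤ (p - 2) * AF V x + QF V x * (‖V x‖ ^ 2 + δ) := by
      nlinarith [mul_le_mul_of_nonpos_left hA (by linarith : p - 2 ≤ 0),
        mul_nonneg hQ hδ.le]
    have hc : 0 ≤ η x ^ 2 * (‖V x‖ ^ 2 + δ) ^ ((p - 4) / 2) := by positivity
    calc (p - 1) * t x
        = (η x ^ 2 * (‖V x‖ ^ 2 + δ) ^ ((p - 4) / 2)) * ((p - 1) * (QF V x * ‖V x‖ ^ 2)) := by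
          simp only [ht_def]; ring
      _ ≤ (η x ^ 2 * (‖V x‖ ^ 2 + δ) ^ ((p - 4) / 2)) *
            ((p - 2) * AF V x + QF V x * (‖V x‖ ^ 2 + δ)) :=
          mul_le_mul_of_nonneg_left hkey hc
      _ = u x := by simp only [hu_def, hsplit]; ring
  -- pointwise inequality 2 : -bb ≤ (p-1)/2 t + 2/(p-1) r
  have hpt2 : ∀ x, -bb x ≤ (p - 1) / 2 * t x + 2 / (p - 1) * r x := by
    intro x
    have hQ := QF_nonneg (V := V) x
    have hA := AF_le (V := V) x
    have hB := BF_sq_le (V := V) (η := η) x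
    have htnn : 0 ≤ t x := by
      simp only [ht_def]
      have : (0:ℝ) ≤ (‖V x‖ ^ 2 + δ) ^ ((p - 4) / 2) := Real.rpow_nonneg (hwpos x).le _
      positivity
    have hrnn : 0 ≤ r x := by
      simp only [hr_def]
      have : (0:ℝ) ≤ (‖V x‖ ^ 2 + δ) ^ (p / 2) := Real.rpow_nonneg (hwpos x).le _
      positivity
    have he1 : (‖V x‖ ^ 2 + δ) ^ ((p - 2) / 2) * (‖V x‖ ^ 2 + δ) ^ ((p - 2) / 2)
        = (‖V x‖ ^ 2 + δ) ^ ((p - 4) / 2) * (‖V x‖ ^ 2 + δ) ^ (p / 2) := by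
      rw [← Real.rpow_add (hwpos x), ← Real.rpow_add (hwpos x)]
      congr 1
      ring
    have hb2 : bb x ^ 2 ≤ 4 * t x * r x := by
      have hBQ : BF V η x ^ 2 ≤ ‖fderiv ℝ η x‖ ^ 2 * (QF V x * ‖V x‖ ^ 2) :=
        hB.trans (mul_le_mul_of_nonneg_left hA (by positivity))
      have hcnn : (0:ℝ) ≤ 4 * η x ^ 2 *
          ((‖V x‖ ^ 2 + δ) ^ ((p - 2) / 2) * (‖V x‖ ^ 2 + δ) ^ ((p - 2) / 2)) := by
        have : (0:ℝ) ≤ (‖V x‖ ^ 2 + δ) ^ ((p - 2) / 2) := Real.rpow_nonneg (hwpos x).le _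
        positivity
      calc bb x ^ 2
          = 4 * η x ^ 2 * ((‖V x‖ ^ 2 + δ) ^ ((p - 2) / 2) * (‖V x‖ ^ 2 + δ) ^ ((p - 2) / 2))
              * BF V η x ^ 2 := by simp only [hbb_def]; ring
        _ ≤ 4 * η x ^ 2 * ((‖V x‖ ^ 2 + δ) ^ ((p - 2) / 2) * (‖V x‖ ^ 2 + δ) ^ ((p - 2) / 2))
              * (‖fderiv ℝ η x‖ ^ 2 * (QF V x * ‖V x‖ ^ 2)) :=
            mul_le_mul_of_nonneg_left hBQ hcnn
        _ = 4 * t x * r x := by rw [he1]; simp only [ht_def, hr_def]; ring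
    set a := Real.sqrt (t x) with ha_def
    set c := Real.sqrt (r x) with hc_def
    have ha2 : a ^ 2 = t x := Real.sq_sqrt htnn
    have hc2 : c ^ 2 = r x := Real.sq_sqrt hrnn
    have hann : 0 ≤ a := Real.sqrt_nonneg _
    have hcnn' : 0 ≤ c := Real.sqrt_nonneg _
    have hstep1 : -bb x ≤ 2 * a * c := by
      have h1 : -bb x ≤ |bb x| := neg_le_abs _
      have h2 : |bb x| = Real.sqrt (bb x ^ 2) := (Real.sqrt_sq_eq_abs _).symm
      have h3 : Real.sqrt (bb x ^ 2) ≤ Real.sqrt ((2 * a * c) ^ 2) := by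
        apply Real.sqrt_le_sqrt
        calc bb x ^ 2 ≤ 4 * t x * r x := hb2
          _ = (2 * a * c) ^ 2 := by rw [mul_pow, mul_pow, ha2, hc2]; ring
      rw [Real.sqrt_sq (mul_nonneg (mul_nonneg (by norm_num) hann) hcnn')] at h3
      rw [h2] at h1
      linarith
    have hyoung : 2 * a * c ≤ (p - 1) / 2 * a ^ 2 + 2 / (p - 1) * c ^ 2 := by
      have hε : (0:ℝ) < (p - 1) / 2 := by linarith
      have hkey : (p - 1) / 2 * (2 * a * c)
          ≤ (p - 1) / 2 * ((p - 1) / 2 * a ^ 2 + 2 / (p - 1) * c ^ 2) := by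
        have hsq := sq_nonneg ((p - 1) / 2 * a - c)
        have hfs : (p - 1) / 2 * (2 / (p - 1) * c ^ 2) = c ^ 2 := by
          field_simp
        nlinarith [hsq, hfs]
      exact le_of_mul_le_mul_left hkey hε
    calc -bb x ≤ 2 * a * c := hstep1
      _ ≤ (p - 1) / 2 * a ^ 2 + 2 / (p - 1) * c ^ 2 := hyoung
      _ = (p - 1) / 2 * t x + 2 / (p - 1) * r x := by rw [ha2, hc2]
  -- integral inequalities
  have hI1 : (p - 1) * ∫ x, t x ≤ ∫ x, u x := by
    rw [← integral_const_mul]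
    exact integral_mono (htInt.const_mul _) huInt hpt1
  have hI2 : ∫ x, -bb x ≤ (p - 1) / 2 * (∫ x, t x) + 2 / (p - 1) * ∫ x, r x := by
    rw [← integral_const_mul, ← integral_const_mul, ← integral_add (htInt.const_mul _)
      (hrInt.const_mul _)]
    exact integral_mono hbbInt.neg ((htInt.const_mul _).add (hrInt.const_mul _)) hpt2
  rw [integral_neg] at hI2
  have hfinal : (p - 1) / 2 * (∫ x, t x) ≤ 2 / (p - 1) * ∫ x, r x := by linarith
  have hmul := mul_le_mul_of_nonneg_left hfinal (div_pos (by norm_num : (0:ℝ) < 2) hq).le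
  have hlhs : 2 / (p - 1) * ((p - 1) / 2 * ∫ x, t x) = ∫ x, t x := by
    field_simp
  have hrhs : 2 / (p - 1) * (2 / (p - 1) * ∫ x, r x) = 4 / (p - 1) ^ 2 * ∫ x, r x := by
    rw [← mul_assoc]
    congr 1
    field_simp
    ring
  rw [hlhs, hrhs] at hmul
  have hgoal : (fun x => η x ^ 2 * (‖V x‖ ^ 2 + δ) ^ ((p - 4) / 2) *
      (∑ i : Fin m, ‖fderiv ℝ V x (EuclideanSpace.single i 1)‖ ^ 2) * ‖V x‖ ^ 2) = t := by
    funext x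
    simp only [ht_def, QF]
  rw [hgoal]
  exact hmul
end

section
/- Let m ≥ 1 and let X : ℝ^m → ℝ^m be a C¹ vector field such that ∫_{ℝ^m} ‖X(x)‖ dx < ∞ and ∫_{ℝ^m} |div X(x)| dx < ∞, where div X = ∑_{i=1}^m ∂X_i/∂x_i. Then ∫_{ℝ^m} div X(x) dx = 0. -/
/-!
Multiply `div X` by the cutoffs `φ (x / R)`, where `φ` is a bump function equal to `1` near the
origin. Integrating by parts moves the derivative onto the cutoff, whose gradient is `O(1 / R)`, so
`|∫ φ (x / R) div X| ≤ (C / R) ∫ ‖X‖ → 0`; by dominated convergence, which is where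
`∫ |div X| < ∞` enters, the same integrals tend to `∫ div X`.
-/

open MeasureTheory Filter Topology

namespace ContDiffBump

variable {E : Type*} [NormedAddCommGroup E] [NormedSpace ℝ E] [FiniteDimensional ℝ E]
  (φ : ContDiffBump (0 : E))

noncomputable def rescale (R : ℝ) : E → ℝ := fun x => φ (R⁻¹ • x)

theorem contDiff_rescale (R : ℝ) {n : ℕ∞} : ContDiff ℝ n (φ.rescale R) :=
  φ.contDiff.comp (contDiff_const_smul _)

theorem hasCompactSupport_rescale {R : ℝ} (hR : R ≠ 0) : HasCompactSupport (φ.rescale R) :=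
  φ.hasCompactSupport.comp_smul (inv_ne_zero hR)

theorem norm_rescale_le_one (R : ℝ) (x : E) : ‖φ.rescale R x‖ ≤ 1 := by
  rw [rescale, Real.norm_of_nonneg φ.nonneg]
  exact φ.le_one

theorem tendsto_rescale_atTop (x : E) : Tendsto (fun R => φ.rescale R x) atTop (𝓝 1) := by
  refine tendsto_const_nhds.congr' ?_
  filter_upwards [eventually_gt_atTop 0, eventually_ge_atTop (‖x‖ / φ.rIn)] with R hR hxR
  refine (φ.one_of_mem_closedBall ?_).symm
  rw [mem_closedBall_zero_iff, norm_smul, Real.norm_of_nonneg (inv_nonneg.2 hR.le), inv_mul_eq_div,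
    div_le_iff₀ hR, mul_comm]
  exact (div_le_iff₀ φ.rIn_pos).1 hxR

theorem exists_norm_fderiv_rescale_le :
    ∃ C, ∀ R > 0, ∀ x : E, ‖fderiv ℝ (φ.rescale R) x‖ ≤ C / R := by
  obtain ⟨C, hC⟩ := (φ.contDiff.continuous_fderiv one_ne_zero).bounded_above_of_compact_support
    (φ.hasCompactSupport.fderiv (𝕜 := ℝ))
  refine ⟨C, fun R hR x => ?_⟩
  unfold rescale
  rw [fderiv_comp_smul, norm_smul, Real.norm_of_nonneg (inv_nonneg.2 hR.le), inv_mul_eq_div]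
  exact div_le_div_of_nonneg_right (hC _) hR.le

theorem tendsto_integral_rescale_mul [MeasurableSpace E] [BorelSpace E] {μ : Measure E}
    {f : E → ℝ} (hf : Integrable f μ) :
    Tendsto (fun R => ∫ x, φ.rescale R x * f x ∂μ) atTop (𝓝 (∫ x, f x ∂μ)) := by
  refine tendsto_integral_filter_of_dominated_convergence (fun x => ‖f x‖)
    (.of_forall fun R => (φ.contDiff_rescale R (n := 0)).continuous.aestronglyMeasurable.mul hf.1)
    (.of_forall fun R => .of_forall fun x => ?_) hf.norm
    (.of_forall fun x => by simpa using (φ.tendsto_rescale_atTop x).mul_const (f x))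
  rw [norm_mul]
  exact mul_le_of_le_one_left (norm_nonneg _) (φ.norm_rescale_le_one R x)

end ContDiffBump

section Divergence

variable {ι : Type*} [Fintype ι] [DecidableEq ι]

noncomputable def divergence (X : EuclideanSpace ℝ ι → EuclideanSpace ℝ ι)
    (x : EuclideanSpace ℝ ι) : ℝ :=
  ∑ i, fderiv ℝ X x (EuclideanSpace.single i 1) i

theorem ContinuousLinearMap.sum_apply_single_mul (L : EuclideanSpace ℝ ι →L[ℝ] ℝ)
    (v : EuclideanSpace ℝ ι) : ∑ i, L (EuclideanSpace.single i 1) * v i = L v := by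
  conv_rhs => rw [← (EuclideanSpace.basisFun ι ℝ).sum_repr v]
  simp [map_sum, mul_comm]

omit [DecidableEq ι] in
theorem fderiv_euclideanSpace_apply {X : EuclideanSpace ℝ ι → EuclideanSpace ℝ ι}
    {x : EuclideanSpace ℝ ι} (hX : DifferentiableAt ℝ X x) (i : ι) (v : EuclideanSpace ℝ ι) :
    fderiv ℝ (fun y => X y i) x v = fderiv ℝ X x v i := by
  have h : HasFDerivAt (fun y => X y i) _ x :=
    (PiLp.hasFDerivAt_apply (𝕜 := ℝ) 2 (X x) i).comp x hX.hasFDerivAt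
  rw [h.fderiv]
  rfl

variable {μ : Measure (EuclideanSpace ℝ ι)} [μ.IsAddHaarMeasure]

theorem integral_mul_divergence {χ : EuclideanSpace ℝ ι → ℝ}
    {X : EuclideanSpace ℝ ι → EuclideanSpace ℝ ι}
    (hχ : ContDiff ℝ 1 χ) (hχc : HasCompactSupport χ) (hX : ContDiff ℝ 1 X) :
    ∫ x, χ x * divergence X x ∂μ = -∫ x, fderiv ℝ χ x (X x) ∂μ := by
  have hXd := hX.differentiable one_ne_zero
  have hχd := hχ.differentiable one_ne_zero
  have hχ' : ∀ v, Continuous fun x => fderiv ℝ χ x v := fun v =>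
    (hχ.continuous_fderiv one_ne_zero).clm_apply continuous_const
  have hX' : ∀ v, Continuous fun x => fderiv ℝ X x v := fun v =>
    (hX.continuous_fderiv one_ne_zero).clm_apply continuous_const
  have hXi : ∀ i, Continuous fun x => X x i := fun i =>
    (PiLp.continuous_apply 2 _ i).comp hX.continuous
  have hχX : ∀ i, Integrable (fun x => χ x * fderiv ℝ X x (EuclideanSpace.single i 1) i) μ :=
    fun i => (hχ.continuous.mul ((PiLp.continuous_apply 2 _ i).comp (hX' _)))
      |>.integrable_of_hasCompactSupport hχc.mul_right
  have hχ'X : ∀ i, Integrable (fun x => fderiv ℝ χ x (EuclideanSpace.single i 1) * X x i) μ :=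
    fun i => ((hχ' _).mul (hXi i)).integrable_of_hasCompactSupport
      (hχc.fderiv_apply (𝕜 := ℝ) _).mul_right
  have ibp : ∀ i, ∫ x, χ x * fderiv ℝ X x (EuclideanSpace.single i 1) i ∂μ =
      -∫ x, fderiv ℝ χ x (EuclideanSpace.single i 1) * X x i ∂μ := by
    intro i
    simp only [← fderiv_euclideanSpace_apply (hXd _)] at hχX ⊢
    exact integral_mul_fderiv_eq_neg_fderiv_mul_of_integrable (hχ'X i) (hχX i)
      ((hχ.continuous.mul (hXi i)).integrable_of_hasCompactSupport hχc.mul_right)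
      (fun x _ => hχd x) (fun x _ => (differentiableAt_piLp 2).1 (hXd x) i)
  calc ∫ x, χ x * divergence X x ∂μ
      = ∑ i, ∫ x, χ x * fderiv ℝ X x (EuclideanSpace.single i 1) i ∂μ := by
        simp only [divergence, Finset.mul_sum]
        exact integral_finsetSum _ fun i _ => hχX i
    _ = -∫ x, ∑ i, fderiv ℝ χ x (EuclideanSpace.single i 1) * X x i ∂μ := by
        rw [integral_finsetSum _ fun i _ => hχ'X i, ← Finset.sum_neg_distrib]
        exact Finset.sum_congr rfl fun i _ => ibp i
    _ = -∫ x, fderiv ℝ χ x (X x) ∂μ := by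
        simp only [ContinuousLinearMap.sum_apply_single_mul]

theorem integral_divergence_eq_zero {X : EuclideanSpace ℝ ι → EuclideanSpace ℝ ι}
    (hX : ContDiff ℝ 1 X) (hXint : Integrable (fun x => ‖X x‖) μ)
    (hdiv : Integrable (divergence X) μ) : ∫ x, divergence X x ∂μ = 0 := by
  let φ : ContDiffBump (0 : EuclideanSpace ℝ ι) := default
  obtain ⟨C, hC⟩ := φ.exists_norm_fderiv_rescale_le
  have to_zero : Tendsto (fun R => ∫ x, φ.rescale R x * divergence X x ∂μ) atTop (𝓝 0) := by
    have hbound : ∀ R > 0,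
        ‖∫ x, φ.rescale R x * divergence X x ∂μ‖ ≤ C / R * ∫ x, ‖X x‖ ∂μ := by
      intro R hR
      rw [integral_mul_divergence (φ.contDiff_rescale R) (φ.hasCompactSupport_rescale hR.ne') hX,
        norm_neg, ← integral_const_mul]
      refine norm_integral_le_of_norm_le (hXint.const_mul _) (.of_forall fun x => ?_)
      exact (ContinuousLinearMap.le_opNorm _ _).trans
        (mul_le_mul_of_nonneg_right (hC R hR x) (norm_nonneg _))
    refine squeeze_zero_norm' ((eventually_gt_atTop 0).mono hbound) ?_
    simpa using (tendsto_const_nhds.div_atTop tendsto_id).mul_const (∫ x, ‖X x‖ ∂μ)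
  exact tendsto_nhds_unique (φ.tendsto_integral_rescale_mul hdiv) to_zero

end Divergence

theorem gaffney_euclidean_general
    (m : ℕ)
    (X : EuclideanSpace ℝ (Fin m) → EuclideanSpace ℝ (Fin m))
    (hX : ContDiff ℝ 1 X)
    (hXint : Integrable (fun x => ‖X x‖))
    (hdivint : Integrable (fun x => ∑ i : Fin m, fderiv ℝ X x (EuclideanSpace.single i 1) i)) :
    ∫ x, ∑ i : Fin m, fderiv ℝ X x (EuclideanSpace.single i 1) i = 0 :=
  integral_divergence_eq_zero hX hXint hdivint

/-- Gaffney's theorem on `ℝ^m`: if a `C¹` vector field `X` satisfies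
`∫ ‖X‖ < ∞` and `∫ |div X| < ∞`, then `∫ div X = 0`. -/
theorem gaffney_euclidean
    (m : ℕ) (hm : 1 ≤ m)
    (X : EuclideanSpace ℝ (Fin m) → EuclideanSpace ℝ (Fin m))
    (hX : ContDiff ℝ 1 X)
    (hXint : Integrable (fun x => ‖X x‖))
    (hdivint : Integrable (fun x => ∑ i : Fin m, fderiv ℝ X x (EuclideanSpace.single i 1) i)) :
    ∫ x, ∑ i : Fin m, fderiv ℝ X x (EuclideanSpace.single i 1) i = 0 :=
  gaffney_euclidean_general m X hX hXint hdivint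
end
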